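/- Let u : ℝ³ → ℝ³ be a smooth compactly supported divergence-free vector field. Then ‖Δ(∂_x, ∂_z)(u₁, u₃)‖_{L²}² = ‖Δ ω₂‖_{L²}² + ‖Δ ∂_y u₂‖_{L²}², where ω₂ = ∂_z u₁ − ∂_x u₃. -/

import Mathlib

open MeasureTheory

/-- Directional partial derivative in direction `v`. -/
noncomputable def pd3 (v : ℝ × ℝ × ℝ) (f : ℝ × ℝ × ℝ → ℝ) (p : ℝ × ℝ × ℝ) : ℝ :=
  fderiv ℝ f p v

/-- Unit coordinate vectors in `ℝ³`. -/
def eX : ℝ × ℝ × ℝ := (1, 0, 0)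
def eY : ℝ × ℝ × ℝ := (0, 1, 0)
def eZ : ℝ × ℝ × ℝ := (0, 0, 1)

/-- The Laplacian. -/
noncomputable def lap3 (f : ℝ × ℝ × ℝ → ℝ) (p : ℝ × ℝ × ℝ) : ℝ :=
  pd3 eX (pd3 eX f) p + pd3 eY (pd3 eY f) p + pd3 eZ (pd3 eZ f) p

section aux

variable {f g h : ℝ × ℝ × ℝ → ℝ} {v w p : ℝ × ℝ × ℝ}

lemma pd3_contDiff (hf : ContDiff ℝ (⊤ : ℕ∞) f) (v : ℝ × ℝ × ℝ) : ContDiff ℝ (⊤ : ℕ∞) (pd3 v f) := by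
  unfold pd3
  exact (hf.fderiv_right (by simp)).clm_apply contDiff_const

lemma pd3_hcs (hf : HasCompactSupport f) (v : ℝ × ℝ × ℝ) : HasCompactSupport (pd3 v f) :=
  hf.fderiv_apply ℝ v

lemma diffAt (hf : ContDiff ℝ (⊤ : ℕ∞) f) : DifferentiableAt ℝ f p :=
  (hf.differentiable (by simp)).differentiableAt

lemma pd3_add (hg : DifferentiableAt ℝ g p) (hh : DifferentiableAt ℝ h p) :
    pd3 v (fun q => g q + h q) p = pd3 v g p + pd3 v h p := by
  unfold pd3; rw [fderiv_fun_add hg hh]; rfl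

lemma pd3_sub (hg : DifferentiableAt ℝ g p) (hh : DifferentiableAt ℝ h p) :
    pd3 v (fun q => g q - h q) p = pd3 v g p - pd3 v h p := by
  unfold pd3; rw [fderiv_fun_sub hg hh]; rfl

lemma pd3_neg : pd3 v (fun q => -g q) p = - pd3 v g p := by
  unfold pd3; rw [fderiv_fun_neg]; rfl

lemma pd3_add_fun (hg : ContDiff ℝ (⊤ : ℕ∞) g) (hh : ContDiff ℝ (⊤ : ℕ∞) h) (v : ℝ × ℝ × ℝ) :
    pd3 v (fun q => g q + h q) = fun q => pd3 v g q + pd3 v h q :=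
  funext fun _ => pd3_add (diffAt hg) (diffAt hh)

lemma pd3_sub_fun (hg : ContDiff ℝ (⊤ : ℕ∞) g) (hh : ContDiff ℝ (⊤ : ℕ∞) h) (v : ℝ × ℝ × ℝ) :
    pd3 v (fun q => g q - h q) = fun q => pd3 v g q - pd3 v h q :=
  funext fun _ => pd3_sub (diffAt hg) (diffAt hh)

lemma pd3_neg_fun (v : ℝ × ℝ × ℝ) :
    pd3 v (fun q => -g q) = fun q => - pd3 v g q :=
  funext fun _ => pd3_neg

lemma fderiv2_apply (hf : ContDiff ℝ (⊤ : ℕ∞) f) (v w p : ℝ × ℝ × ℝ) :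
    pd3 v (pd3 w f) p = fderiv ℝ (fderiv ℝ f) p v w := by
  have h1 : DifferentiableAt ℝ (fderiv ℝ f) p :=
    ((hf.fderiv_right (m := (⊤ : ℕ∞)) (by simp)).differentiable (by simp)).differentiableAt
  have h2 : HasFDerivAt (fun q => fderiv ℝ f q w) ((fderiv ℝ (fderiv ℝ f) p).flip w) p := by
    have := h1.hasFDerivAt.clm_apply (hasFDerivAt_const w p)
    simpa using this
  show fderiv ℝ (fun q => fderiv ℝ f q w) p v = _
  rw [h2.fderiv]
  rfl

lemma pd3_comm (hf : ContDiff ℝ (⊤ : ℕ∞) f) (v w p : ℝ × ℝ × ℝ) :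
    pd3 v (pd3 w f) p = pd3 w (pd3 v f) p := by
  rw [fderiv2_apply hf, fderiv2_apply hf]
  exact (hf.contDiffAt.isSymmSndFDerivAt (by rw [minSmoothness_of_isRCLikeNormedField]; exact WithTop.coe_le_coe.mpr le_top)) v w

lemma lap3_contDiff (hf : ContDiff ℝ (⊤ : ℕ∞) f) : ContDiff ℝ (⊤ : ℕ∞) (lap3 f) := by
  unfold lap3
  exact ((pd3_contDiff (pd3_contDiff hf eX) eX).add
    (pd3_contDiff (pd3_contDiff hf eY) eY)).add (pd3_contDiff (pd3_contDiff hf eZ) eZ)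

lemma lap3_hcs (hf : HasCompactSupport f) : HasCompactSupport (lap3 f) := by
  unfold lap3
  exact ((pd3_hcs (pd3_hcs hf eX) eX).add
    (pd3_hcs (pd3_hcs hf eY) eY)).add (pd3_hcs (pd3_hcs hf eZ) eZ)

lemma lap3_sub (hg : ContDiff ℝ (⊤ : ℕ∞) g) (hh : ContDiff ℝ (⊤ : ℕ∞) h) (p : ℝ × ℝ × ℝ) :
    lap3 (fun q => g q - h q) p = lap3 g p - lap3 h p := by
  unfold lap3
  rw [pd3_sub_fun hg hh eX, pd3_sub_fun hg hh eY, pd3_sub_fun hg hh eZ,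
    pd3_sub (diffAt (pd3_contDiff hg eX)) (diffAt (pd3_contDiff hh eX)),
    pd3_sub (diffAt (pd3_contDiff hg eY)) (diffAt (pd3_contDiff hh eY)),
    pd3_sub (diffAt (pd3_contDiff hg eZ)) (diffAt (pd3_contDiff hh eZ))]
  ring

lemma lap3_add (hg : ContDiff ℝ (⊤ : ℕ∞) g) (hh : ContDiff ℝ (⊤ : ℕ∞) h) (p : ℝ × ℝ × ℝ) :
    lap3 (fun q => g q + h q) p = lap3 g p + lap3 h p := by
  unfold lap3
  rw [pd3_add_fun hg hh eX, pd3_add_fun hg hh eY, pd3_add_fun hg hh eZ,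
    pd3_add (diffAt (pd3_contDiff hg eX)) (diffAt (pd3_contDiff hh eX)),
    pd3_add (diffAt (pd3_contDiff hg eY)) (diffAt (pd3_contDiff hh eY)),
    pd3_add (diffAt (pd3_contDiff hg eZ)) (diffAt (pd3_contDiff hh eZ))]
  ring

lemma lap3_neg (p : ℝ × ℝ × ℝ) :
    lap3 (fun q => -g q) p = - lap3 g p := by
  unfold lap3
  rw [pd3_neg_fun eX, pd3_neg_fun eY, pd3_neg_fun eZ]
  have : ∀ v w : ℝ × ℝ × ℝ, pd3 v (fun q => -pd3 w g q) p = - pd3 v (pd3 w g) p :=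
    fun v w => pd3_neg
  rw [this eX eX, this eY eY, this eZ eZ]
  ring

lemma lap3_pd3_comm (hf : ContDiff ℝ (⊤ : ℕ∞) f) (v p : ℝ × ℝ × ℝ) :
    lap3 (pd3 v f) p = pd3 v (lap3 f) p := by
  have key : ∀ w : ℝ × ℝ × ℝ, pd3 w (pd3 w (pd3 v f)) p = pd3 v (pd3 w (pd3 w f)) p := by
    intro w
    have h1 : pd3 w (pd3 v f) = pd3 v (pd3 w f) := funext fun q => pd3_comm hf w v q
    rw [h1]
    exact pd3_comm (pd3_contDiff hf w) w v p
  show pd3 eX (pd3 eX (pd3 v f)) p + pd3 eY (pd3 eY (pd3 v f)) p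
      + pd3 eZ (pd3 eZ (pd3 v f)) p = pd3 v (lap3 f) p
  rw [key eX, key eY, key eZ]
  unfold lap3
  rw [pd3_add ((diffAt (pd3_contDiff (pd3_contDiff hf eX) eX)).fun_add
      (diffAt (pd3_contDiff (pd3_contDiff hf eY) eY)))
      (diffAt (pd3_contDiff (pd3_contDiff hf eZ) eZ)),
    pd3_add (diffAt (pd3_contDiff (pd3_contDiff hf eX) eX))
      (diffAt (pd3_contDiff (pd3_contDiff hf eY) eY))]

lemma ibp (hf : ContDiff ℝ (⊤ : ℕ∞) f) (hfs : HasCompactSupport f)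
    (hg : ContDiff ℝ (⊤ : ℕ∞) g) (hgs : HasCompactSupport g) (v : ℝ × ℝ × ℝ) :
    ∫ p, pd3 v f p * g p = - ∫ p, f p * pd3 v g p := by
  haveI : (volume : Measure (ℝ × ℝ × ℝ)).IsAddHaarMeasure := by
    rw [show (volume : Measure (ℝ × ℝ × ℝ)) = (volume : Measure ℝ).prod volume from rfl]
    infer_instance
  obtain ⟨C, hC⟩ := ContDiff.lipschitzWith_of_hasCompactSupport hfs hf (by simp)
  obtain ⟨D, hD⟩ := ContDiff.lipschitzWith_of_hasCompactSupport hgs hg (by simp)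
  have h := LipschitzWith.integral_lineDeriv_mul_eq (μ := volume) hC hD hgs v
  have e1 : (fun x => lineDeriv ℝ f x v * g x) = fun x => pd3 v f x * g x := by
    funext x; rw [(diffAt hf).lineDeriv_eq_fderiv]; rfl
  have e2 : (fun x => lineDeriv ℝ g x (-v) * f x) = fun x => -(f x * pd3 v g x) := by
    funext x
    rw [(diffAt hg).lineDeriv_eq_fderiv, map_neg]
    show -(fderiv ℝ g x v) * f x = -(f x * pd3 v g x)
    unfold pd3; ring
  rw [e1, e2, integral_neg] at h
  exact h

lemma ibp2 (hf : ContDiff ℝ (⊤ : ℕ∞) f) (hfs : HasCompactSupport f)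
    (hg : ContDiff ℝ (⊤ : ℕ∞) g) (hgs : HasCompactSupport g) (v w : ℝ × ℝ × ℝ) :
    ∫ p, pd3 v f p * pd3 w g p = ∫ p, pd3 w f p * pd3 v g p := by
  rw [ibp hf hfs (pd3_contDiff hg w) (pd3_hcs hgs w) v,
    ibp hf hfs (pd3_contDiff hg v) (pd3_hcs hgs v) w]
  have : (fun p => f p * pd3 v (pd3 w g) p) = fun p => f p * pd3 w (pd3 v g) p := by
    funext p; rw [pd3_comm hg v w p]
  rw [this]

lemma int_mul (hf : Continuous f) (hfs : HasCompactSupport f) (hg : Continuous g) :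
    Integrable (fun p => f p * g p) := by
  exact (hf.mul hg).integrable_of_hasCompactSupport (hfs.mul_right)

end aux

/-- For a smooth compactly supported divergence-free field `u` on `ℝ³`, with
`ω₂ = ∂_z u₁ − ∂_x u₃`,
`‖Δ(∂_x,∂_z)(u₁,u₃)‖² = ‖Δω₂‖² + ‖Δ∂_y u₂‖²`. -/
theorem stmt_3 (u : (ℝ × ℝ × ℝ) → (Fin 3 → ℝ))
    (hu : ContDiff ℝ (⊤ : ℕ∞) u) (hsupp : HasCompactSupport u)
    (hdiv : ∀ p, pd3 eX (fun q => u q 0) p + pd3 eY (fun q => u q 1) p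
        + pd3 eZ (fun q => u q 2) p = 0) :
    (∫ p, ((lap3 (pd3 eX (fun q => u q 0)) p) ^ 2 + (lap3 (pd3 eZ (fun q => u q 0)) p) ^ 2
        + (lap3 (pd3 eX (fun q => u q 2)) p) ^ 2 + (lap3 (pd3 eZ (fun q => u q 2)) p) ^ 2)) =
      (∫ p, (lap3 (fun q => pd3 eZ (fun r => u r 0) q - pd3 eX (fun r => u r 2) q) p) ^ 2)
        + ∫ p, (lap3 (pd3 eY (fun q => u q 1)) p) ^ 2 := by
  set u0 : ℝ × ℝ × ℝ → ℝ := fun q => u q 0 with hu0def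
  set u1 : ℝ × ℝ × ℝ → ℝ := fun q => u q 1 with hu1def
  set u2 : ℝ × ℝ × ℝ → ℝ := fun q => u q 2 with hu2def
  have h0 : ContDiff ℝ (⊤ : ℕ∞) u0 := contDiff_pi.mp hu 0
  have h1 : ContDiff ℝ (⊤ : ℕ∞) u1 := contDiff_pi.mp hu 1
  have h2 : ContDiff ℝ (⊤ : ℕ∞) u2 := contDiff_pi.mp hu 2
  have hs0 : HasCompactSupport u0 := hsupp.comp_left (g := fun w : Fin 3 → ℝ => w 0) rfl
  have hs1 : HasCompactSupport u1 := hsupp.comp_left (g := fun w : Fin 3 → ℝ => w 1) rfl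
  have hs2 : HasCompactSupport u2 := hsupp.comp_left (g := fun w : Fin 3 → ℝ => w 2) rfl
  set A : ℝ × ℝ × ℝ → ℝ := lap3 (pd3 eX u0) with hAdef
  set B : ℝ × ℝ × ℝ → ℝ := lap3 (pd3 eZ u0) with hBdef
  set C : ℝ × ℝ × ℝ → ℝ := lap3 (pd3 eX u2) with hCdef
  set D : ℝ × ℝ × ℝ → ℝ := lap3 (pd3 eZ u2) with hDdef
  have hcA : Continuous A := (lap3_contDiff (pd3_contDiff h0 eX)).continuous
  have hcB : Continuous B := (lap3_contDiff (pd3_contDiff h0 eZ)).continuous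
  have hcC : Continuous C := (lap3_contDiff (pd3_contDiff h2 eX)).continuous
  have hcD : Continuous D := (lap3_contDiff (pd3_contDiff h2 eZ)).continuous
  have hsA : HasCompactSupport A := lap3_hcs (pd3_hcs hs0 eX)
  have hsB : HasCompactSupport B := lap3_hcs (pd3_hcs hs0 eZ)
  have hsC : HasCompactSupport C := lap3_hcs (pd3_hcs hs2 eX)
  have hsD : HasCompactSupport D := lap3_hcs (pd3_hcs hs2 eZ)
  -- second integrand
  have eBC : ∀ p, lap3 (fun q => pd3 eZ u0 q - pd3 eX u2 q) p = B p - C p :=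
    fun p => lap3_sub (pd3_contDiff h0 eZ) (pd3_contDiff h2 eX) p
  -- third integrand, via divergence-free condition
  have hdivfun : pd3 eY u1 = fun p => -(pd3 eX u0 p + pd3 eZ u2 p) := by
    funext p
    have := hdiv p
    linarith
  have eAD : ∀ p, lap3 (pd3 eY u1) p = -(A p + D p) := by
    intro p
    rw [hdivfun, lap3_neg, lap3_add (pd3_contDiff h0 eX) (pd3_contDiff h2 eZ)]
  have eAD2 : ∀ p, (lap3 (pd3 eY u1) p) ^ 2 = (A p + D p) ^ 2 := by
    intro p; rw [eAD p]; ring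
  simp only [eBC, eAD2]
  -- key integration-by-parts identity
  have key : ∫ p, B p * C p = ∫ p, A p * D p := by
    have hA : ∀ p, A p = pd3 eX (lap3 u0) p := fun p => lap3_pd3_comm h0 eX p
    have hB : ∀ p, B p = pd3 eZ (lap3 u0) p := fun p => lap3_pd3_comm h0 eZ p
    have hC' : ∀ p, C p = pd3 eX (lap3 u2) p := fun p => lap3_pd3_comm h2 eX p
    have hD : ∀ p, D p = pd3 eZ (lap3 u2) p := fun p => lap3_pd3_comm h2 eZ p
    simp only [hA, hB, hC', hD]
    exact ibp2 (lap3_contDiff h0) (lap3_hcs hs0) (lap3_contDiff h2) (lap3_hcs hs2) eZ eX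
  -- integrability facts
  have iBC : Integrable (fun p => B p * C p) := int_mul hcB hsB hcC
  have iAD : Integrable (fun p => A p * D p) := int_mul hcA hsA hcD
  have hsBC : HasCompactSupport (fun p => B p - C p) := by
    have h1 : HasCompactSupport (fun p => -C p) :=
      hsC.comp_left (g := fun x : ℝ => -x) (by simp)
    have h2 : HasCompactSupport (fun p => B p + -C p) := hsB.add h1
    simpa [sub_eq_add_neg] using h2
  have hsADp : HasCompactSupport (fun p => A p + D p) := hsA.add hsD
  have iBC2 : Integrable (fun p => (B p - C p) ^ 2) := by
    have := int_mul (hcB.sub hcC) hsBC (hcB.sub hcC)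
    simpa [sq] using this
  have iAD2 : Integrable (fun p => (A p + D p) ^ 2) := by
    have := int_mul (hcA.add hcD) hsADp (hcA.add hcD)
    simpa [sq] using this
  have ering : ∀ p, A p ^ 2 + B p ^ 2 + C p ^ 2 + D p ^ 2
      = ((B p - C p) ^ 2 + (A p + D p) ^ 2) + (2 * (B p * C p) - 2 * (A p * D p)) := by
    intro p; ring
  simp only [ering]
  have i12 : Integrable (fun p => (B p - C p) ^ 2 + (A p + D p) ^ 2) := iBC2.add iAD2
  have i34 : Integrable (fun p => 2 * (B p * C p) - 2 * (A p * D p)) :=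
    (iBC.const_mul 2).sub (iAD.const_mul 2)
  have iBC' : Integrable (fun p => 2 * (B p * C p)) := iBC.const_mul 2
  have iAD' : Integrable (fun p => 2 * (A p * D p)) := iAD.const_mul 2
  rw [integral_add i12 i34, integral_sub iBC' iAD',
    integral_const_mul, integral_const_mul, key, sub_self, add_zero,
    integral_add iBC2 iAD2]
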